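/- If C is an admissible column over [±n], then Φ(C) is a coadmissible column of the same height; moreover Φ is a bijection between admissible columns and coadmissible columns of the same height over [±n]. -/

import Mathlib

/-- The alphabet `[±n] = {1 < 2 < ⋯ < n < n̄ < ⋯ < 1̄}` is encoded as `{1, …, 2n} ⊆ ℕ`
with the usual order, the barred letter `ī` being encoded as `2n+1-i`. -/
def bar (n x : ℕ) : ℕ := 2 * n + 1 - x

/-- A column over `[±n]`: a strictly increasing list with entries in `{1, …, 2n}`. -/
def IsColumn (n : ℕ) (C : List ℕ) : Prop :=
  C.Chain' (· < ·) ∧ ∀ x ∈ C, 1 ≤ x ∧ x ≤ 2 * n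

/-- The one column condition (1CC): for every unbarred `i` with both `i` and `ī` in `C`,
the number of entries `x` with `x ≤ i` or `x ≥ ī` is at most `i`. -/
def OCC (n : ℕ) (C : List ℕ) : Prop :=
  ∀ i, 1 ≤ i → i ≤ n → i ∈ C → bar n i ∈ C →
    C.countP (fun x => decide (x ≤ i ∨ bar n i ≤ x)) ≤ i

/-- The set `I` of unbarred letters `z` such that both `z` and `z̄` occur in `C`,
listed in decreasing order `z₁ > z₂ > ⋯ > z_r`. -/
def Ilist (n : ℕ) (C : List ℕ) : List ℕ :=
  ((List.range (n + 1)).filter (fun z => decide (1 ≤ z ∧ z ∈ C ∧ bar n z ∈ C))).reverse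

/-- The greatest unbarred letter `t < bound` with `t ∉ C` and `t̄ ∉ C`, if any. -/
def pickBelow (n : ℕ) (C : List ℕ) (bound : ℕ) : Option ℕ :=
  ((List.range bound).filter (fun t => decide (1 ≤ t ∧ t ≤ n ∧ t ∉ C ∧ bar n t ∉ C))).max?

/-- The greedy construction of the set `J = {t₁ > ⋯ > t_r}` of Definition of splitting:
`t₁` is the greatest letter `< z₁` with `t₁, t̄₁ ∉ C` and `tᵢ` is the greatest letter
`< min (tᵢ₋₁, zᵢ)` with `tᵢ, t̄ᵢ ∉ C`; returns `none` if at some stage no letter exists. -/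
def splitJ (n : ℕ) (C : List ℕ) : List ℕ → ℕ → Option (List ℕ)
  | [], _ => some []
  | z :: zs, bound =>
    match pickBelow n C (min bound z) with
    | none => none
    | some t => (splitJ n C zs t).map (t :: ·)

def JlistOpt (n : ℕ) (C : List ℕ) : Option (List ℕ) := splitJ n C (Ilist n C) (n + 1)

/-- `C` can be split: the set `J` of the splitting definition exists. -/
def CanSplit (n : ℕ) (C : List ℕ) : Prop := (JlistOpt n C).isSome = true

/-- The set `J = {t₁ > ⋯ > t_r}` (empty if `C` cannot be split). -/
def Jlist (n : ℕ) (C : List ℕ) : List ℕ := (JlistOpt n C).getD []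

def sortCol (L : List ℕ) : List ℕ := L.mergeSort (· ≤ ·)

/-- The right column `rC`: replace each barred `z̄ᵢ` (for `zᵢ ∈ I`) by `t̄ᵢ` and reorder. -/
def rCol (n : ℕ) (C : List ℕ) : List ℕ :=
  sortCol ((C.filter (fun x => decide (x ∉ (Ilist n C).map (bar n)))) ++ (Jlist n C).map (bar n))

/-- The left column `ℓC`: replace each unbarred `zᵢ ∈ I` by `tᵢ` and reorder. -/
def lCol (n : ℕ) (C : List ℕ) : List ℕ :=
  sortCol ((C.filter (fun x => decide (x ∉ Ilist n C))) ++ Jlist n C)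

/-- `Φ(C)`: the column of the same size whose unbarred entries are taken from `ℓC`
and whose barred entries are taken from `rC`. -/
def PhiCol (n : ℕ) (C : List ℕ) : List ℕ :=
  sortCol ((lCol n C).filter (fun x => decide (x ≤ n)) ++
    (rCol n C).filter (fun x => decide (n < x)))

/-- A column is coadmissible if for every pair `i, ī` in `C`, the number `N*(i)` of
entries `x` with `i ≤ x ≤ ī` satisfies `N*(i) ≤ n - i + 1`. -/
def CoAdm (n : ℕ) (C : List ℕ) : Prop :=
  ∀ i, 1 ≤ i → i ≤ n → i ∈ C → bar n i ∈ C →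
    C.countP (fun x => decide (i ≤ x ∧ x ≤ bar n i)) ≤ n - i + 1

/-!
`Φ` removes the pairs `z, z̄` (`z ∈ I`) of `C` and inserts the pairs `t, t̄` (`t ∈ J`) of free
letters chosen greedily. The one column condition at `z ∈ I` bounds the pairs below `z` by the
free letters below `z`, which keeps the greedy choice from getting stuck; and the greedy `J`
interlaces below `I`.

For coadmissibility, folding `x ↦ min x x̄` sends the entries of `Φ(C)` in `[i, ī]` outside the
new pairs injectively to letters of `[i, n]` outside `I ∪ J`; since there are no more letters of
`J` from `i` on than letters of `I` above `i`, this gives `N*(i) ≤ n - i + 1`.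

For bijectivity, the mirror symmetry `i ↦ n + 1 - i` (on both halves of the alphabet) sends
coadmissible columns to admissible ones, and `Φ (mirror (Φ C)) = mirror C`: the pairs of
`mirror (Φ C)` are the mirrored `J`, and its greedy splitting picks exactly the mirrored `I`.
Hence `mirror ∘ Φ ∘ mirror` inverts `Φ`.
-/

open List Finset

lemma IsColumn.pairwise {n : ℕ} {C : List ℕ} (hC : IsColumn n C) : C.Pairwise (· < ·) :=
  List.isChain_iff_pairwise.mp hC.1

lemma IsColumn.nodup {n : ℕ} {C : List ℕ} (hC : IsColumn n C) : C.Nodup :=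
  hC.pairwise.nodup

lemma IsColumn.eq_of_mem_iff {n : ℕ} {C D : List ℕ} (hC : IsColumn n C) (hD : IsColumn n D)
    (h : ∀ x, x ∈ C ↔ x ∈ D) : C = D :=
  hC.pairwise.eq_of_mem_iff hD.pairwise h

lemma sortCol_perm (L : List ℕ) : sortCol L ~ L := List.mergeSort_perm _ _

lemma mem_sortCol {L : List ℕ} {x : ℕ} : x ∈ sortCol L ↔ x ∈ L := (sortCol_perm L).mem_iff

lemma isColumn_sortCol {n : ℕ} {L : List ℕ} (hL : L.Nodup) (hb : ∀ x ∈ L, 1 ≤ x ∧ x ≤ 2 * n) :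
    IsColumn n (sortCol L) :=
  ⟨(List.sortedLE_mergeSort.sortedLT_of_nodup (List.nodup_mergeSort.2 hL)).isChain,
    fun x hx => hb x (mem_sortCol.1 hx)⟩

lemma length_le_of_nodup_of_forall_mem_Icc {L : List ℕ} {a b : ℕ} (hL : L.Nodup)
    (h : ∀ x ∈ L, a ≤ x ∧ x ≤ b) : L.length ≤ b + 1 - a := by
  rw [← List.toFinset_card_of_nodup hL, ← Nat.card_Icc]
  exact Finset.card_le_card fun x hx => Finset.mem_Icc.2 (h x (List.mem_toFinset.1 hx))

lemma List.mem_zip_swap_of_mem_zip_reverse {α β : Type*} {l₁ : List α} {l₂ : List β} {a : α}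
    {b : β} (hl : l₁.length = l₂.length) (h : (a, b) ∈ l₁.reverse.zip l₂.reverse) :
    (b, a) ∈ l₂.zip l₁ := by
  have hrev := List.reverse_zipWith (f := Prod.mk) hl
  simp only [← List.zip_eq_zipWith] at hrev
  rw [← hrev, List.mem_reverse] at h
  exact List.zip_swap l₁ l₂ ▸ List.mem_map.2 ⟨(a, b), h, rfl⟩

lemma List.Nodup.countP_eq_card_filter {α : Type*} [DecidableEq α] {L : List α} (hL : L.Nodup)
    (p : α → Bool) :
    L.countP p = #(L.toFinset.filter fun x => p x) := by
  rw [← List.toFinset_filter, List.toFinset_card_of_nodup (hL.filter p),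
    List.countP_eq_length_filter]

lemma bar_bar {n x : ℕ} (hx : x ≤ 2 * n) : bar n (bar n x) = x := by unfold bar; omega

lemma bar_inj {n x y : ℕ} (hx : x ≤ 2 * n) (hy : y ≤ 2 * n) : bar n x = bar n y ↔ x = y := by
  unfold bar; omega

def freeLetters (n : ℕ) (C : List ℕ) : Finset ℕ :=
  (Finset.Icc 1 n).filter (fun t => t ∉ C ∧ bar n t ∉ C)

lemma mem_freeLetters {n : ℕ} {C : List ℕ} {t : ℕ} :
    t ∈ freeLetters n C ↔ 1 ≤ t ∧ t ≤ n ∧ t ∉ C ∧ bar n t ∉ C := by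
  simp [freeLetters, and_assoc]

lemma mem_Ilist {n : ℕ} {C : List ℕ} {z : ℕ} :
    z ∈ Ilist n C ↔ 1 ≤ z ∧ z ≤ n ∧ z ∈ C ∧ bar n z ∈ C := by
  simp only [Ilist, List.mem_reverse, List.mem_filter, List.mem_range, decide_eq_true_eq]
  exact ⟨fun ⟨h, h1, hC⟩ => ⟨h1, by omega, hC⟩, fun ⟨h1, h, hC⟩ => ⟨by omega, h1, hC⟩⟩

lemma mem_range_of_mem_Ilist {n : ℕ} {C : List ℕ} {z : ℕ} (hz : z ∈ Ilist n C) :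
    1 ≤ z ∧ z ≤ n :=
  ⟨(mem_Ilist.1 hz).1, (mem_Ilist.1 hz).2.1⟩

lemma Ilist_pairwise (n : ℕ) (C : List ℕ) : (Ilist n C).Pairwise (· > ·) :=
  List.pairwise_reverse.2 (List.pairwise_lt_range.filter _)

/-- The mirror image `i ↦ n + 1 - i`, `ī ↦ bar (n + 1 - i)`, reversing the unbarred and the
barred letters separately. -/
def mirror (n x : ℕ) : ℕ := if x ≤ n then n + 1 - x else 3 * n + 1 - x

lemma mirror_of_le {n x : ℕ} (h : x ≤ n) : mirror n x = n + 1 - x := if_pos h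

lemma mirror_mem_range {n x : ℕ} (h1 : 1 ≤ x) (h2 : x ≤ 2 * n) :
    1 ≤ mirror n x ∧ mirror n x ≤ 2 * n := by unfold mirror; split <;> omega

lemma mirror_mirror {n x : ℕ} (h1 : 1 ≤ x) (h2 : x ≤ 2 * n) : mirror n (mirror n x) = x := by
  unfold mirror; split_ifs <;> omega

lemma bar_mirror {n x : ℕ} (h1 : 1 ≤ x) (h2 : x ≤ 2 * n) :
    bar n (mirror n x) = mirror n (bar n x) := by
  unfold bar mirror; split_ifs <;> omega

lemma mem_reverse_map_mirror {n : ℕ} {L : List ℕ} (hL : ∀ x ∈ L, 1 ≤ x ∧ x ≤ 2 * n) {s : ℕ}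
    (hs1 : 1 ≤ s) (hs2 : s ≤ 2 * n) : s ∈ (L.map (mirror n)).reverse ↔ mirror n s ∈ L := by
  rw [List.mem_reverse, List.mem_map]
  constructor
  · rintro ⟨x, hx, rfl⟩
    rwa [mirror_mirror (hL x hx).1 (hL x hx).2]
  · exact fun hs => ⟨mirror n s, hs, mirror_mirror hs1 hs2⟩

lemma pairwise_reverse_map_mirror {n : ℕ} {L : List ℕ} (hL : L.Pairwise (· > ·))
    (h : ∀ x ∈ L, x ≤ n) : ((L.map (mirror n)).reverse).Pairwise (· > ·) := by
  rw [List.pairwise_reverse, List.pairwise_map]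
  refine hL.imp_of_mem fun ha hb hab => ?_
  rw [mirror_of_le (h _ ha), mirror_of_le (h _ hb)]
  have := h _ ha
  omega

/-! ### The greedy splitting -/

def IsGreedySplit (F : Finset ℕ) : List ℕ → ℕ → List ℕ → Prop
  | [], _, ts => ts = []
  | z :: zs, b, ts => ∃ t ts', ts = t :: ts' ∧ t ∈ F ∧ t < min b z ∧
      (∀ s ∈ F, s < min b z → s ≤ t) ∧ IsGreedySplit F zs t ts'

lemma pickBelow_eq_some_iff {n : ℕ} {C : List ℕ} {b t : ℕ} :
    pickBelow n C b = some t ↔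
      t ∈ freeLetters n C ∧ t < b ∧ ∀ s ∈ freeLetters n C, s < b → s ≤ t := by
  simp only [pickBelow, List.max?_eq_some_iff, List.mem_filter, List.mem_range,
    decide_eq_true_eq, mem_freeLetters]
  exact ⟨fun ⟨⟨hb, ht⟩, hmax⟩ => ⟨ht, hb, fun s hs hsb => hmax s ⟨hsb, hs⟩⟩,
    fun ⟨ht, hb, hmax⟩ => ⟨⟨hb, ht⟩, fun s hs => hmax s hs.2 hs.1⟩⟩

lemma splitJ_eq_some_iff {n : ℕ} {C : List ℕ} :
    ∀ {zs : List ℕ} {b : ℕ} {ts : List ℕ},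
      splitJ n C zs b = some ts ↔ IsGreedySplit (freeLetters n C) zs b ts
  | [], b, ts => by simp [splitJ, IsGreedySplit, eq_comm]
  | z :: zs, b, ts => by
    simp only [splitJ, IsGreedySplit]
    cases hp : pickBelow n C (min b z) with
    | none =>
      simp only [reduceCtorEq, false_iff, not_exists, not_and]
      intro t _ _ htF htb hmax _
      simp [pickBelow_eq_some_iff.2 ⟨htF, htb, hmax⟩] at hp
    | some t =>
      obtain ⟨htF, htb, hmax⟩ := pickBelow_eq_some_iff.1 hp
      simp only [Option.map_eq_some_iff, splitJ_eq_some_iff]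
      constructor
      · rintro ⟨ts', hts', rfl⟩
        exact ⟨t, ts', rfl, htF, htb, hmax, hts'⟩
      · rintro ⟨t', ts', rfl, ht'F, ht'b, hmax', hts'⟩
        obtain rfl : t' = t := le_antisymm (hmax t' ht'F ht'b) (hmax' t htF htb)
        exact ⟨ts', hts', rfl⟩

namespace IsGreedySplit

variable {F : Finset ℕ}

lemma mem_and_lt : ∀ {zs : List ℕ} {b : ℕ} {ts : List ℕ}, IsGreedySplit F zs b ts →
    ∀ t ∈ ts, t ∈ F ∧ t < b
  | [], _, _, h => by simp [show _ = [] from h]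
  | _ :: _, _, _, h => by
    obtain ⟨t, ts, rfl, htF, htb, -, h⟩ := h
    simp only [List.mem_cons, forall_eq_or_imp]
    exact ⟨⟨htF, by omega⟩, fun u hu => ⟨(h.mem_and_lt u hu).1, by
      have := (h.mem_and_lt u hu).2; omega⟩⟩

lemma pairwise : ∀ {zs : List ℕ} {b : ℕ} {ts : List ℕ}, IsGreedySplit F zs b ts →
    ts.Pairwise (· > ·)
  | [], _, _, h => by simp [show _ = [] from h]
  | _ :: _, _, _, h => by
    obtain ⟨t, ts, rfl, -, -, -, h⟩ := h
    exact List.pairwise_cons.2 ⟨fun u hu => (h.mem_and_lt u hu).2, h.pairwise⟩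

lemma length_eq : ∀ {zs : List ℕ} {b : ℕ} {ts : List ℕ}, IsGreedySplit F zs b ts →
    ts.length = zs.length
  | [], _, _, h => by simp [show _ = [] from h]
  | _ :: _, _, _, h => by
    obtain ⟨t, ts, rfl, -, -, -, h⟩ := h
    simp [h.length_eq]

lemma exists_of_countP_le : ∀ (zs : List ℕ) (b : ℕ), zs.Pairwise (· > ·) →
    (∀ z ∈ zs, zs.countP (· ≤ z) ≤ #(F.filter (· < min b z))) →
    ∃ ts, IsGreedySplit F zs b ts
  | [], _, _, _ => ⟨[], rfl⟩
  | z :: zs, b, hzs, H => by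
    obtain ⟨hz, hzs⟩ := List.pairwise_cons.1 hzs
    have Hz := H z List.mem_cons_self
    simp only [List.countP_cons, le_refl, decide_true, if_true] at Hz
    have hne : (F.filter (· < min b z)).Nonempty := by rw [← Finset.card_pos]; omega
    set t := (F.filter (· < min b z)).max' hne
    obtain ⟨htF, htb⟩ := Finset.mem_filter.1 ((F.filter (· < min b z)).max'_mem hne)
    have hmax : ∀ s ∈ F, s < min b z → s ≤ t := fun s hs hsb =>
      Finset.le_max' _ s (Finset.mem_filter.2 ⟨hs, hsb⟩)
    have hcard : #(F.filter (· < min b z)) ≤ #(F.filter (· < t)) + 1 := by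
      calc #(F.filter (· < min b z)) ≤ #(insert t (F.filter (· < t))) := by
            refine Finset.card_le_card fun s hs => ?_
            obtain ⟨hsF, hsb⟩ := Finset.mem_filter.1 hs
            rcases (hmax s hsF hsb).lt_or_eq with hst | rfl
            · exact Finset.mem_insert_of_mem (Finset.mem_filter.2 ⟨hsF, hst⟩)
            · exact Finset.mem_insert_self _ _
        _ ≤ #(F.filter (· < t)) + 1 := Finset.card_insert_le _ _
    obtain ⟨ts, hts⟩ := exists_of_countP_le zs t hzs fun z' hz' => by
      have hz'z : z' < z := hz z' hz'
      have H' := H z' (List.mem_cons_of_mem _ hz')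
      rw [List.countP_cons, if_neg (by simpa using hz'z), add_zero] at H'
      rcases le_or_gt z' t with hle | hlt
      · rw [min_eq_right hle]
        rwa [min_eq_right (show z' ≤ b by omega)] at H'
      · have hmono : zs.countP (· ≤ z') ≤ zs.countP (· ≤ z) :=
          List.countP_mono_left fun x _ hx => by simp only [decide_eq_true_eq] at hx ⊢; omega
        rw [min_eq_left hlt.le]
        omega
    exact ⟨t :: ts, t, ts, rfl, htF, htb, hmax, hts⟩

/-- A free letter strictly between a chosen letter and its pair was chosen earlier. With
`of_gap` this characterizes greedy splittings by a condition that is symmetric under `mirror`. -/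
lemma gap : ∀ {zs : List ℕ} {b : ℕ} {ts : List ℕ}, IsGreedySplit F zs b ts →
    zs.Pairwise (· > ·) →
    ∀ t z, (t, z) ∈ ts.zip zs → t < z ∧ ∀ u ∈ F, t < u → u < min b z → u ∈ ts
  | [], _, _, _, _ => by simp
  | z :: zs, b, _, h, hzs => by
    obtain ⟨t, ts, rfl, -, htb, hmax, h⟩ := h
    obtain ⟨hz, hzs⟩ := List.pairwise_cons.1 hzs
    intro t' z' hp
    rw [List.zip_cons_cons, List.mem_cons, Prod.mk.injEq] at hp
    rcases hp with ⟨rfl, rfl⟩ | hp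
    · exact ⟨by omega, fun u hu htu hub => absurd (hmax u hu hub) (by omega)⟩
    · obtain ⟨hlt, hgap⟩ := h.gap hzs t' z' hp
      have hz'z := hz z' (List.of_mem_zip hp).2
      refine ⟨hlt, fun u hu htu hub => ?_⟩
      rcases lt_trichotomy u t with hut | rfl | hut
      · exact List.mem_cons_of_mem _ (hgap u hu htu (by omega))
      · exact List.mem_cons_self
      · exact absurd (hmax u hu (by omega)) (by omega)

lemma of_gap : ∀ {zs : List ℕ} {b : ℕ} {ts : List ℕ}, ts.Pairwise (· > ·) →
    ts.length = zs.length → (∀ t ∈ ts, t ∈ F ∧ t < b) →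
    (∀ t z, (t, z) ∈ ts.zip zs → t < z ∧ ∀ u ∈ F, t < u → u < min b z → u ∈ ts) →
    IsGreedySplit F zs b ts
  | [], _, _, _, hlen, _, _ => List.eq_nil_of_length_eq_zero hlen
  | _ :: _, _, [], _, hlen, _, _ => absurd hlen (by simp)
  | z :: zs, b, t :: ts, hpw, hlen, hmem, hgap => by
    obtain ⟨hlt, hts⟩ := List.pairwise_cons.1 hpw
    obtain ⟨htz, hgap₀⟩ := hgap t z (by simp)
    obtain ⟨htF, htb⟩ := hmem t List.mem_cons_self
    refine ⟨t, ts, rfl, htF, by omega, fun s hs hsb => ?_,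
      of_gap hts (by simpa using hlen)
        (fun u hu => ⟨(hmem u (List.mem_cons_of_mem _ hu)).1, hlt u hu⟩) fun t' z' hp => ?_⟩
    · by_contra hst
      rcases List.mem_cons.1 (hgap₀ s hs (by omega) hsb) with rfl | hs'
      · omega
      · exact absurd (hlt s hs') (by omega)
    · obtain ⟨h1, h2⟩ := hgap t' z' (List.mem_cons_of_mem _ hp)
      refine ⟨h1, fun u hu htu hub => ?_⟩
      rcases List.mem_cons.1 (h2 u hu htu (by omega)) with rfl | h
      · omega
      · exact h

lemma countP_le : ∀ {zs : List ℕ} {b : ℕ} {ts : List ℕ}, IsGreedySplit F zs b ts →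
    ∀ i, ts.countP (i ≤ ·) ≤ zs.countP (i < ·)
  | [], _, _, h, _ => by simp [show _ = [] from h]
  | z :: zs, b, _, h, i => by
    obtain ⟨t, ts, rfl, -, htb, -, h⟩ := h
    simp only [List.countP_cons, decide_eq_true_eq]
    by_cases hit : i ≤ t
    · have := h.countP_le i
      simp only [hit, show i < z by omega, if_true]
      omega
    · have : ts.countP (i ≤ ·) = 0 := List.countP_eq_zero.2 fun u hu => by
        have := (h.mem_and_lt u hu).2; simp only [decide_eq_true_eq]; omega
      simp [hit, this]

lemma mirror {n : ℕ} {G : Finset ℕ} {zs ts : List ℕ} (h : IsGreedySplit F zs (n + 1) ts)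
    (hzs : zs.Pairwise (· > ·)) (hzn : ∀ z ∈ zs, 1 ≤ z ∧ z ≤ n)
    (hFn : ∀ t ∈ F, 1 ≤ t ∧ t ≤ n)
    (hG : ∀ s, s ∈ G ↔ 1 ≤ s ∧ s ≤ n ∧ (mirror n s ∈ zs ∨ (mirror n s ∈ F ∧ mirror n s ∉ ts))) :
    IsGreedySplit G (ts.map (mirror n)).reverse (n + 1) (zs.map (mirror n)).reverse := by
  have hzs2 : ∀ z ∈ zs, 1 ≤ z ∧ z ≤ 2 * n := fun z hz => ⟨(hzn z hz).1, by linarith [hzn z hz]⟩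
  apply of_gap (pairwise_reverse_map_mirror hzs fun z hz => (hzn z hz).2)
  · simp [h.length_eq]
  · intro s hs
    obtain ⟨z, hz, rfl⟩ := List.mem_map.1 (List.mem_reverse.1 hs)
    obtain ⟨hz1, hzn⟩ := hzn z hz
    rw [mirror_of_le hzn] at hs ⊢
    refine ⟨(hG _).2 ⟨by omega, by omega, Or.inl ?_⟩, by omega⟩
    rwa [← mirror_of_le hzn, mirror_mirror hz1 (by omega)]
  · intro a c hac
    rw [← List.map_reverse, ← List.map_reverse, List.zip_map, List.mem_map] at hac
    obtain ⟨⟨z, t⟩, hzt, hac⟩ := hac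
    simp only [Prod.map, Prod.mk.injEq] at hac
    obtain ⟨rfl, rfl⟩ := hac
    have hp := List.mem_zip_swap_of_mem_zip_reverse (by simp [h.length_eq]) hzt
    obtain ⟨htz, hgap⟩ := h.gap hzs t z hp
    obtain ⟨hz1, hzn'⟩ := hzn z (List.of_mem_zip hp).2
    obtain ⟨ht1, htn⟩ := hFn t (h.mem_and_lt t (List.of_mem_zip hp).1).1
    rw [mirror_of_le hzn', mirror_of_le htn]
    refine ⟨by omega, fun u hu hzu hut => ?_⟩
    obtain ⟨hu1, hun, hu⟩ := (hG u).1 hu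
    rw [mem_reverse_map_mirror hzs2 hu1 (by omega)]
    rw [mirror_of_le hun] at hu ⊢
    rcases hu with hu | ⟨huF, hut'⟩
    · exact hu
    · exact absurd (hgap _ huF (by omega) (by omega)) hut'

end IsGreedySplit

lemma Jlist_eq_of_isGreedySplit {n : ℕ} {C ts : List ℕ}
    (h : IsGreedySplit (freeLetters n C) (Ilist n C) (n + 1) ts) : Jlist n C = ts := by
  rw [Jlist, JlistOpt, splitJ_eq_some_iff.2 h, Option.getD_some]

lemma canSplit_iff {n : ℕ} {C : List ℕ} :
    CanSplit n C ↔ ∃ ts, IsGreedySplit (freeLetters n C) (Ilist n C) (n + 1) ts := by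
  simp only [CanSplit, JlistOpt, Option.isSome_iff_exists, splitJ_eq_some_iff]

lemma isGreedySplit_Jlist {n : ℕ} {C : List ℕ} (h : CanSplit n C) :
    IsGreedySplit (freeLetters n C) (Ilist n C) (n + 1) (Jlist n C) := by
  obtain ⟨ts, hts⟩ := canSplit_iff.1 h
  rwa [Jlist_eq_of_isGreedySplit hts]

lemma isGreedySplit_Jlist_or_eq_nil (n : ℕ) (C : List ℕ) :
    IsGreedySplit (freeLetters n C) (Ilist n C) (n + 1) (Jlist n C) ∨ Jlist n C = [] := by
  by_cases h : CanSplit n C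
  · exact Or.inl (isGreedySplit_Jlist h)
  · refine Or.inr ?_
    simp only [CanSplit, Option.not_isSome_iff_eq_none] at h
    rw [Jlist, h, Option.getD_none]

lemma mem_freeLetters_of_mem_Jlist {n : ℕ} {C : List ℕ} {t : ℕ} (ht : t ∈ Jlist n C) :
    t ∈ freeLetters n C := by
  rcases isGreedySplit_Jlist_or_eq_nil n C with h | h
  · exact (h.mem_and_lt t ht).1
  · simp [h] at ht

lemma Jlist_pairwise (n : ℕ) (C : List ℕ) : (Jlist n C).Pairwise (· > ·) := by
  rcases isGreedySplit_Jlist_or_eq_nil n C with h | h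
  · exact h.pairwise
  · simp [h]

lemma countP_Jlist_le (n : ℕ) (C : List ℕ) (i : ℕ) :
    (Jlist n C).countP (i ≤ ·) ≤ (Ilist n C).countP (i < ·) := by
  rcases isGreedySplit_Jlist_or_eq_nil n C with h | h
  · exact h.countP_le i
  · simp [h]

/-! ### Admissible columns can be split -/

lemma countP_occ_eq {n z : ℕ} {C : List ℕ} (hC : IsColumn n C) (hz : z ≤ n) :
    C.countP (fun x => decide (x ≤ z ∨ bar n z ≤ x)) =
      #((Icc 1 z).filter (· ∈ C)) + #((Icc 1 z).filter (bar n · ∈ C)) := by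
  have hlow : C.toFinset.filter (· ≤ z) = (Icc 1 z).filter (· ∈ C) := by
    ext x
    simp only [Finset.mem_filter, List.mem_toFinset, Finset.mem_Icc]
    exact ⟨fun ⟨hx, hxz⟩ => ⟨⟨(hC.2 x hx).1, hxz⟩, hx⟩, fun ⟨⟨_, hxz⟩, hx⟩ => ⟨hx, hxz⟩⟩
  have hhigh : #(C.toFinset.filter (bar n z ≤ ·)) = #((Icc 1 z).filter (bar n · ∈ C)) := by
    refine Finset.card_nbij' (bar n) (bar n) (fun x hx => ?_) (fun s hs => ?_)
      (fun x hx => ?_) (fun s hs => ?_)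
    · simp only [Finset.mem_coe, Finset.mem_filter, List.mem_toFinset, Finset.mem_Icc] at hx ⊢
      have := hC.2 x hx.1
      rw [bar_bar this.2]
      exact ⟨⟨by unfold bar; omega, by unfold bar at hx ⊢; omega⟩, hx.1⟩
    · simp only [Finset.mem_coe, Finset.mem_filter, List.mem_toFinset, Finset.mem_Icc] at hs ⊢
      exact ⟨hs.2, by unfold bar; omega⟩
    · simp only [Finset.mem_coe, Finset.mem_filter, List.mem_toFinset] at hx
      exact bar_bar (hC.2 x hx.1).2
    · simp only [Finset.mem_coe, Finset.mem_filter, Finset.mem_Icc] at hs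
      exact bar_bar (by omega)
  have hdisj : Disjoint (C.toFinset.filter (· ≤ z)) (C.toFinset.filter (bar n z ≤ ·)) :=
    Finset.disjoint_filter.2 fun x _ hxz hzx => by unfold bar at hzx; omega
  rw [hC.nodup.countP_eq_card_filter, ← hhigh, ← hlow, ← Finset.card_union_of_disjoint hdisj,
    ← Finset.filter_or]
  simp

lemma card_pairs_le_card_free {n : ℕ} {C : List ℕ} (hC : IsColumn n C) (hocc : OCC n C) {z : ℕ}
    (hz : z ∈ Ilist n C) :
    #((Icc 1 z).filter fun s => s ∈ C ∧ bar n s ∈ C) ≤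
      #((Icc 1 z).filter fun s => ¬(s ∈ C ∨ bar n s ∈ C)) := by
  obtain ⟨hz1, hzn, hzC, hbzC⟩ := mem_Ilist.1 hz
  have hocc := hocc z hz1 hzn hzC hbzC
  rw [countP_occ_eq hC hzn] at hocc
  have hunion := Finset.card_union_add_card_inter ((Icc 1 z).filter (· ∈ C))
    ((Icc 1 z).filter (bar n · ∈ C))
  rw [← Finset.filter_or, ← Finset.filter_and] at hunion
  have hsplit := Finset.card_filter_add_card_filter_not (s := Icc 1 z)
    (fun s => s ∈ C ∨ bar n s ∈ C)
  rw [Nat.card_Icc] at hsplit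
  omega

lemma canSplit_of_occ {n : ℕ} {C : List ℕ} (hC : IsColumn n C) (hocc : OCC n C) :
    CanSplit n C := by
  refine canSplit_iff.2 (IsGreedySplit.exists_of_countP_le _ _ (Ilist_pairwise n C) fun z hz => ?_)
  obtain ⟨hz1, hzn, hzC, -⟩ := mem_Ilist.1 hz
  have hpairs : (Ilist n C).countP (· ≤ z) = #((Icc 1 z).filter fun s => s ∈ C ∧ bar n s ∈ C) := by
    rw [(Ilist_pairwise n C).nodup.countP_eq_card_filter]
    congr 1
    ext s
    simp only [Finset.mem_filter, List.mem_toFinset, Finset.mem_Icc, mem_Ilist, decide_eq_true_eq]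
    constructor
    · rintro ⟨⟨hs1, -, hsC, hbsC⟩, hsz⟩
      exact ⟨⟨hs1, hsz⟩, hsC, hbsC⟩
    · rintro ⟨⟨hs1, hsz⟩, hsC, hbsC⟩
      exact ⟨⟨hs1, by omega, hsC, hbsC⟩, hsz⟩
  have hfree : (Icc 1 z).filter (fun s => ¬(s ∈ C ∨ bar n s ∈ C)) ⊆
      (freeLetters n C).filter (· < min (n + 1) z) := by
    intro s hs
    simp only [Finset.mem_filter, Finset.mem_Icc, not_or] at hs
    have hsz : s ≠ z := fun h => hs.2.1 (h ▸ hzC)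
    exact Finset.mem_filter.2 ⟨mem_freeLetters.2 ⟨hs.1.1, by omega, hs.2⟩, by omega⟩
  rw [hpairs]
  exact (card_pairs_le_card_free hC hocc hz).trans (Finset.card_le_card hfree)

/-! ### The column `Φ(C)` -/

section Phi

variable {n : ℕ} {C : List ℕ}

lemma mem_range_of_mem_Jlist {t : ℕ} (ht : t ∈ Jlist n C) : 1 ≤ t ∧ t ≤ n :=
  have h := mem_freeLetters.1 (mem_freeLetters_of_mem_Jlist ht)
  ⟨h.1, h.2.1⟩

lemma not_mem_of_mem_Jlist {t : ℕ} (ht : t ∈ Jlist n C) : t ∉ C ∧ bar n t ∉ C :=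
  (mem_freeLetters.1 (mem_freeLetters_of_mem_Jlist ht)).2.2

lemma List.Nodup.map_bar {L : List ℕ} (hL : L.Nodup) (h : ∀ x ∈ L, x ≤ 2 * n) :
    (L.map (bar n)).Nodup :=
  hL.map_on fun x hx y hy hxy => (bar_inj (h x hx) (h y hy)).1 hxy

lemma mem_map_bar_iff {L : List ℕ} (hL : ∀ x ∈ L, x ≤ 2 * n) {y : ℕ} (hy : y ≤ 2 * n) :
    y ∈ L.map (bar n) ↔ bar n y ∈ L := by
  constructor
  · intro hy
    obtain ⟨x, hx, rfl⟩ := List.mem_map.1 hy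
    rwa [bar_bar (hL x hx)]
  · exact fun h => List.mem_map.2 ⟨bar n y, h, bar_bar hy⟩

lemma mem_phiCol {x : ℕ} :
    x ∈ PhiCol n C ↔ (x ∈ C ∧ x ∉ Ilist n C ∧ x ∉ (Ilist n C).map (bar n)) ∨
      x ∈ Jlist n C ∨ x ∈ (Jlist n C).map (bar n) := by
  have hI : ∀ z ∈ Ilist n C, 1 ≤ z ∧ z ≤ n := fun z hz => mem_range_of_mem_Ilist hz
  simp only [PhiCol, lCol, rCol, mem_sortCol, List.mem_append, List.mem_filter, List.mem_map,
    decide_eq_true_eq, not_exists, not_and]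
  constructor
  · rintro ((⟨(⟨hxC, hxI⟩ | hxJ), hxn⟩) | ⟨(⟨hxC, hxI⟩ | hxJ), hxn⟩)
    · exact Or.inl ⟨hxC, hxI, fun z hz hzx => by have := hI z hz; unfold bar at hzx; omega⟩
    · exact Or.inr (Or.inl hxJ)
    · exact Or.inl ⟨hxC, fun h => by have := hI x h; omega, hxI⟩
    · exact Or.inr (Or.inr hxJ)
  · rintro (⟨hxC, hxI, hxIb⟩ | hxJ | ⟨t, ht, rfl⟩)
    · rcases le_or_gt x n with hxn | hxn
      · exact Or.inl ⟨Or.inl ⟨hxC, hxI⟩, hxn⟩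
      · exact Or.inr ⟨Or.inl ⟨hxC, hxIb⟩, hxn⟩
    · exact Or.inl ⟨Or.inr hxJ, (mem_range_of_mem_Jlist hxJ).2⟩
    · have := mem_range_of_mem_Jlist ht
      exact Or.inr ⟨Or.inr ⟨t, ht, rfl⟩, by unfold bar; omega⟩

lemma mem_phiCol_of_le {s : ℕ} (hs1 : 1 ≤ s) (hsn : s ≤ n) :
    s ∈ PhiCol n C ↔ (s ∈ C ∧ s ∉ Ilist n C) ∨ s ∈ Jlist n C := by
  have hs : s ∉ (Ilist n C).map (bar n) ∧ s ∉ (Jlist n C).map (bar n) := by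
    constructor <;> intro h <;> obtain ⟨t, ht, rfl⟩ := List.mem_map.1 h
    · have := mem_Ilist.1 ht; unfold bar at hsn; omega
    · have := mem_range_of_mem_Jlist ht; unfold bar at hsn; omega
  rw [mem_phiCol]
  tauto

lemma bar_mem_phiCol {s : ℕ} (hs1 : 1 ≤ s) (hsn : s ≤ n) :
    bar n s ∈ PhiCol n C ↔ (bar n s ∈ C ∧ s ∉ Ilist n C) ∨ s ∈ Jlist n C := by
  have hsI : bar n s ∉ Ilist n C := fun h => by have := mem_Ilist.1 h; unfold bar at this; omega
  have hsJ : bar n s ∉ Jlist n C := fun h => by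
    have := mem_range_of_mem_Jlist h; unfold bar at this; omega
  have hI : ∀ z ∈ Ilist n C, z ≤ 2 * n := fun z hz => by have := mem_Ilist.1 hz; omega
  have hJ : ∀ t ∈ Jlist n C, t ≤ 2 * n := fun t ht => by
    have := mem_range_of_mem_Jlist ht; omega
  rw [mem_phiCol, mem_map_bar_iff hI (by unfold bar; omega),
    mem_map_bar_iff hJ (by unfold bar; omega), bar_bar (by omega)]
  tauto

lemma nodup_phiCol (hC : C.Nodup) : (PhiCol n C).Nodup := by
  have hJ := (Jlist_pairwise n C).nodup
  have hJb : ((Jlist n C).map (bar n)).Nodup :=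
    hJ.map_bar fun t ht => by have := mem_range_of_mem_Jlist ht; omega
  have hl : (lCol n C).Nodup := by
    refine List.nodup_mergeSort.2 (List.nodup_append.2 ⟨hC.filter _, hJ, ?_⟩)
    rintro x hx _ ht rfl
    exact (not_mem_of_mem_Jlist ht).1 (List.mem_of_mem_filter hx)
  have hr : (rCol n C).Nodup := by
    refine List.nodup_mergeSort.2 (List.nodup_append.2 ⟨hC.filter _, hJb, ?_⟩)
    rintro x hx _ hy rfl
    obtain ⟨t, ht, rfl⟩ := List.mem_map.1 hy
    exact (not_mem_of_mem_Jlist ht).2 (List.mem_of_mem_filter hx)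
  refine List.nodup_mergeSort.2 (List.nodup_append.2 ⟨hl.filter _, hr.filter _, ?_⟩)
  intro x hx y hy hxy
  simp only [List.mem_filter, decide_eq_true_eq] at hx hy
  omega

lemma isColumn_phiCol (hC : IsColumn n C) : IsColumn n (PhiCol n C) := by
  refine isColumn_sortCol (List.nodup_mergeSort.1 (nodup_phiCol hC.nodup)) fun x hx => ?_
  rcases mem_phiCol.1 (mem_sortCol.2 hx) with ⟨hxC, -⟩ | hxJ | hxJ
  · exact hC.2 x hxC
  · have := mem_range_of_mem_Jlist hxJ; omega
  · obtain ⟨t, ht, rfl⟩ := List.mem_map.1 hxJ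
    have := mem_range_of_mem_Jlist ht; unfold bar; omega

def keptEntries (n : ℕ) (C : List ℕ) : List ℕ :=
  C.filter fun x => x ∉ Ilist n C ∧ x ∉ (Ilist n C).map (bar n)

lemma nodup_append_map_bar {L : List ℕ} (hL : L.Nodup) (h : ∀ x ∈ L, x ≤ n) :
    (L ++ L.map (bar n)).Nodup := by
  refine List.nodup_append.2 ⟨hL, hL.map_bar fun x hx => by linarith [h x hx], ?_⟩
  rintro x hx _ hy rfl
  obtain ⟨y, hy, hyx⟩ := List.mem_map.1 hy
  have := h x hx
  have := h y hy
  unfold bar at hyx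
  omega

lemma perm_keptEntries_append (hC : C.Nodup) :
    C ~ keptEntries n C ++ (Ilist n C ++ (Ilist n C).map (bar n)) := by
  have hI := nodup_append_map_bar (Ilist_pairwise n C).nodup fun z hz =>
    (mem_range_of_mem_Ilist hz).2
  refine (List.perm_ext_iff_of_nodup hC (List.nodup_append.2 ⟨hC.filter _, hI, ?_⟩)).2
    fun x => ?_
  · rintro x hx _ hy rfl
    simp only [List.mem_filter, decide_eq_true_eq] at hx
    exact (List.mem_append.1 hy).elim hx.2.1 hx.2.2
  · have hsub : x ∈ Ilist n C ++ (Ilist n C).map (bar n) → x ∈ C := by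
      rintro hx
      rcases List.mem_append.1 hx with hx | hx
      · exact (mem_Ilist.1 hx).2.2.1
      · obtain ⟨z, hz, rfl⟩ := List.mem_map.1 hx
        exact (mem_Ilist.1 hz).2.2.2
    simp only [List.mem_append, List.mem_filter, decide_eq_true_eq] at hsub ⊢
    tauto

lemma phiCol_perm (hC : C.Nodup) :
    PhiCol n C ~ keptEntries n C ++ (Jlist n C ++ (Jlist n C).map (bar n)) := by
  have hJ := nodup_append_map_bar (Jlist_pairwise n C).nodup fun t ht =>
    (mem_range_of_mem_Jlist ht).2
  refine (List.perm_ext_iff_of_nodup (nodup_phiCol hC)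
    (List.nodup_append.2 ⟨hC.filter _, hJ, ?_⟩)).2 fun x => ?_
  · rintro x hx y hy rfl
    have hxC := List.mem_of_mem_filter hx
    rcases List.mem_append.1 hy with hy | hy
    · exact (not_mem_of_mem_Jlist hy).1 hxC
    · obtain ⟨t, ht, rfl⟩ := List.mem_map.1 hy
      exact (not_mem_of_mem_Jlist ht).2 hxC
  · simp only [mem_phiCol, List.mem_append, List.mem_filter, decide_eq_true_eq]

lemma length_phiCol (hC : IsColumn n C) (hs : CanSplit n C) :
    (PhiCol n C).length = C.length := by
  rw [(phiCol_perm hC.nodup).length_eq, (perm_keptEntries_append (n := n) hC.nodup).length_eq]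
  simp [(isGreedySplit_Jlist hs).length_eq]

lemma Ilist_phiCol : Ilist n (PhiCol n C) = Jlist n C := by
  refine (Ilist_pairwise n _).eq_of_mem_iff (Jlist_pairwise n C) fun z => ?_
  rw [mem_Ilist]
  constructor
  · rintro ⟨hz1, hzn, hz, hbz⟩
    rw [mem_phiCol_of_le hz1 hzn] at hz
    rw [bar_mem_phiCol hz1 hzn] at hbz
    have := @mem_Ilist n C z
    tauto
  · intro hz
    obtain ⟨hz1, hzn⟩ := mem_range_of_mem_Jlist hz
    exact ⟨hz1, hzn, (mem_phiCol_of_le hz1 hzn).2 (Or.inr hz),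
      (bar_mem_phiCol hz1 hzn).2 (Or.inr hz)⟩

lemma mem_freeLetters_phiCol {s : ℕ} :
    s ∈ freeLetters n (PhiCol n C) ↔ s ∈ Ilist n C ∨ (s ∈ freeLetters n C ∧ s ∉ Jlist n C) := by
  rw [mem_freeLetters, mem_freeLetters]
  constructor
  · rintro ⟨hs1, hsn, hs, hbs⟩
    rw [mem_phiCol_of_le hs1 hsn] at hs
    rw [bar_mem_phiCol hs1 hsn] at hbs
    tauto
  · rintro (hs | ⟨⟨hs1, hsn, hsC, hbsC⟩, hsJ⟩)
    · obtain ⟨hs1, hsn, hsC, hbsC⟩ := mem_Ilist.1 hs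
      have hsJ := fun h => (not_mem_of_mem_Jlist (n := n) (C := C) h).1 hsC
      rw [mem_phiCol_of_le hs1 hsn, bar_mem_phiCol hs1 hsn]
      tauto
    · rw [mem_phiCol_of_le hs1 hsn, bar_mem_phiCol hs1 hsn]
      tauto

end Phi

/-! ### `Φ(C)` is coadmissible -/

section CoAdm

variable {n : ℕ} {C : List ℕ}

lemma bar_not_mem_of_mem_keptEntries (hC : IsColumn n C) {x : ℕ} (hx : x ∈ keptEntries n C) :
    bar n x ∉ C := by
  simp only [keptEntries, List.mem_filter, decide_eq_true_eq] at hx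
  obtain ⟨hxC, hxI, hxIb⟩ := hx
  obtain ⟨hx1, hx2⟩ := hC.2 x hxC
  intro hbx
  rcases le_or_gt x n with hxn | hxn
  · exact hxI (mem_Ilist.2 ⟨hx1, hxn, hxC, hbx⟩)
  · refine hxIb (List.mem_map.2 ⟨bar n x, mem_Ilist.2 ⟨?_, ?_, hbx, ?_⟩, bar_bar hx2⟩)
    · unfold bar; omega
    · unfold bar; omega
    · rwa [bar_bar hx2]

lemma min_bar_injOn_keptEntries (hC : IsColumn n C) {x y : ℕ} (hx : x ∈ keptEntries n C)
    (hy : y ∈ keptEntries n C) (hxy : min x (bar n x) = min y (bar n y)) : x = y := by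
  have hxC := (List.mem_filter.1 hx).1
  have hyC := (List.mem_filter.1 hy).1
  have := hC.2 x hxC
  have := hC.2 y hyC
  by_contra hne
  exact bar_not_mem_of_mem_keptEntries hC hy (by convert hxC using 1; unfold bar at hxy ⊢; omega)

lemma min_bar_not_mem_Ilist_Jlist (hC : IsColumn n C) {x : ℕ} (hx : x ∈ keptEntries n C) :
    min x (bar n x) ∉ Ilist n C ∧ min x (bar n x) ∉ Jlist n C := by
  have hxC := (List.mem_filter.1 hx).1
  have hbx := bar_not_mem_of_mem_keptEntries hC hx
  have : (min x (bar n x) ∈ C ∧ bar n (min x (bar n x)) ∉ C) ∨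
      (min x (bar n x) ∉ C ∧ bar n (min x (bar n x)) ∈ C) := by
    rcases min_choice x (bar n x) with h | h <;> rw [h]
    · exact Or.inl ⟨hxC, hbx⟩
    · exact Or.inr ⟨hbx, by rwa [bar_bar (hC.2 x hxC).2]⟩
  have := @mem_Ilist n C (min x (bar n x))
  have := fun h => not_mem_of_mem_Jlist (n := n) (C := C) (t := min x (bar n x)) h
  tauto

/-- Folding `x ↦ min x x̄` maps the kept entries between `i` and `ī` injectively into the
unbarred letters of `[i, n]` that are neither pairs nor in `J`. -/
lemma countP_keptEntries_add_le (hC : IsColumn n C) (i : ℕ) :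
    (keptEntries n C).countP (fun x => decide (i ≤ x ∧ x ≤ bar n i)) +
      (Jlist n C).countP (i ≤ ·) + (Ilist n C).countP (i < ·) ≤ n + 1 - i := by
  set K := (keptEntries n C).filter (fun x => decide (i ≤ x ∧ x ≤ bar n i))
  set L := K.map (fun x => min x (bar n x)) ++
    ((Jlist n C).filter (i ≤ ·) ++ (Ilist n C).filter (i < ·))
  have hnodup : L.Nodup := by
    refine List.nodup_append.2 ⟨?_, List.nodup_append.2 ⟨(Jlist_pairwise n C).nodup.filter _,
      (Ilist_pairwise n C).nodup.filter _, ?_⟩, ?_⟩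
    · exact (hC.nodup.filter _ |>.filter _).map_on fun x hx y hy hxy =>
        min_bar_injOn_keptEntries hC (List.mem_of_mem_filter hx) (List.mem_of_mem_filter hy) hxy
    · rintro t ht _ hz rfl
      exact (not_mem_of_mem_Jlist (List.mem_of_mem_filter ht)).1
        (mem_Ilist.1 (List.mem_of_mem_filter hz)).2.2.1
    · rintro _ hy u hu rfl
      obtain ⟨x, hx, rfl⟩ := List.mem_map.1 hy
      have := min_bar_not_mem_Ilist_Jlist hC (List.mem_of_mem_filter hx)
      rcases List.mem_append.1 hu with hu | hu
      · exact this.2 (List.mem_of_mem_filter hu)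
      · exact this.1 (List.mem_of_mem_filter hu)
  have hrange : ∀ y ∈ L, i ≤ y ∧ y ≤ n := by
    intro y hy
    rcases List.mem_append.1 hy with hy | hy
    · obtain ⟨x, hx, rfl⟩ := List.mem_map.1 hy
      obtain ⟨hx, hxi⟩ := List.mem_filter.1 hx
      simp only [decide_eq_true_eq] at hxi
      have := hC.2 x (List.mem_filter.1 hx).1
      unfold bar at hxi ⊢
      omega
    · rcases List.mem_append.1 hy with hy | hy <;> obtain ⟨hy, hiy⟩ := List.mem_filter.1 hy <;>
        simp only [decide_eq_true_eq] at hiy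
      · exact ⟨hiy, (mem_range_of_mem_Jlist hy).2⟩
      · exact ⟨hiy.le, (mem_range_of_mem_Ilist hy).2⟩
  have := length_le_of_nodup_of_forall_mem_Icc hnodup hrange
  simp only [L, K, List.length_append, List.length_map, ← List.countP_eq_length_filter] at this
  omega

lemma coAdm_phiCol (hC : IsColumn n C) : CoAdm n (PhiCol n C) := by
  intro i _ _ _ _
  have hJ : ∀ t ∈ Jlist n C, 1 ≤ t ∧ t ≤ n := fun t ht => mem_range_of_mem_Jlist ht
  have hJcount : (Jlist n C).countP (fun x => decide (i ≤ x ∧ x ≤ bar n i)) =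
      (Jlist n C).countP (i ≤ ·) :=
    List.countP_congr fun t ht => by
      have := hJ t ht; simp only [decide_eq_true_eq]; unfold bar; omega
  have hJbcount : ((Jlist n C).map (bar n)).countP (fun x => decide (i ≤ x ∧ x ≤ bar n i)) =
      (Jlist n C).countP (i ≤ ·) := by
    rw [List.countP_map]
    exact List.countP_congr fun t ht => by
      have := hJ t ht; simp only [Function.comp, decide_eq_true_eq]; unfold bar; omega
  rw [(phiCol_perm hC.nodup).countP_eq, List.countP_append, List.countP_append, hJcount,
    hJbcount]
  have := countP_keptEntries_add_le hC i
  have := countP_Jlist_le n C i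
  omega

end CoAdm

/-! ### Mirror image of a column -/

def mirrorCol (n : ℕ) (D : List ℕ) : List ℕ := sortCol (D.map (mirror n))

section Mirror

variable {n : ℕ} {D : List ℕ}

lemma mem_mirrorCol (hD : IsColumn n D) {x : ℕ} :
    x ∈ mirrorCol n D ↔ 1 ≤ x ∧ x ≤ 2 * n ∧ mirror n x ∈ D := by
  rw [mirrorCol, mem_sortCol, List.mem_map]
  constructor
  · rintro ⟨y, hy, rfl⟩
    obtain ⟨hy1, hy2⟩ := hD.2 y hy
    exact ⟨(mirror_mem_range hy1 hy2).1, (mirror_mem_range hy1 hy2).2, by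
      rwa [mirror_mirror hy1 hy2]⟩
  · exact fun ⟨h1, h2, hx⟩ => ⟨mirror n x, hx, mirror_mirror h1 h2⟩

lemma isColumn_mirrorCol (hD : IsColumn n D) : IsColumn n (mirrorCol n D) := by
  refine isColumn_sortCol (hD.nodup.map_on fun x hx y hy hxy => ?_) fun x hx => ?_
  · rw [← mirror_mirror (hD.2 x hx).1 (hD.2 x hx).2, hxy,
      mirror_mirror (hD.2 y hy).1 (hD.2 y hy).2]
  · obtain ⟨y, hy, rfl⟩ := List.mem_map.1 hx
    exact mirror_mem_range (hD.2 y hy).1 (hD.2 y hy).2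

lemma length_mirrorCol : (mirrorCol n D).length = D.length := by
  rw [mirrorCol, (sortCol_perm _).length_eq, List.length_map]

lemma mirrorCol_mirrorCol (hD : IsColumn n D) : mirrorCol n (mirrorCol n D) = D := by
  refine (isColumn_mirrorCol (isColumn_mirrorCol hD)).eq_of_mem_iff hD fun x => ?_
  rw [mem_mirrorCol (isColumn_mirrorCol hD)]
  constructor
  · rintro ⟨h1, h2, hx⟩
    have := ((mem_mirrorCol hD).1 hx).2.2
    rwa [mirror_mirror h1 h2] at this
  · intro hx
    obtain ⟨h1, h2⟩ := hD.2 x hx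
    exact ⟨h1, h2, (mem_mirrorCol hD).2 ⟨(mirror_mem_range h1 h2).1,
      (mirror_mem_range h1 h2).2, by rwa [mirror_mirror h1 h2]⟩⟩

lemma occ_mirrorCol (hD : IsColumn n D) (hco : CoAdm n D) : OCC n (mirrorCol n D) := by
  intro i hi1 hin hi hbi
  have hi' := ((mem_mirrorCol hD).1 hi).2.2
  have hbi' := ((mem_mirrorCol hD).1 hbi).2.2
  rw [← bar_mirror hi1 (by omega), mirror_of_le hin] at hbi'
  rw [mirror_of_le hin] at hi'
  have hcount : (mirrorCol n D).countP (fun x => decide (x ≤ i ∨ bar n i ≤ x)) =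
      D.countP (fun y => decide (n + 1 - i ≤ y ∧ y ≤ bar n (n + 1 - i))) := by
    rw [mirrorCol, (sortCol_perm _).countP_eq, List.countP_map]
    refine List.countP_congr fun y hy => ?_
    have := hD.2 y hy
    simp only [Function.comp, decide_eq_true_eq]
    unfold mirror bar
    split_ifs <;> omega
  have := hco (n + 1 - i) (by omega) (by omega) hi' hbi'
  omega

lemma mirror_mem_mirrorCol_iff (hD : IsColumn n D) {s : ℕ} (hs1 : 1 ≤ s) (hsn : s ≤ n) :
    (s ∈ mirrorCol n D ↔ mirror n s ∈ D) ∧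
      (bar n s ∈ mirrorCol n D ↔ bar n (mirror n s) ∈ D) := by
  rw [mem_mirrorCol hD, mem_mirrorCol hD, bar_mirror hs1 (by omega)]
  exact ⟨⟨fun h => h.2.2, fun h => ⟨hs1, by omega, h⟩⟩,
    ⟨fun h => h.2.2, fun h => ⟨by unfold bar; omega, by unfold bar; omega, h⟩⟩⟩

lemma Ilist_mirrorCol (hD : IsColumn n D) :
    Ilist n (mirrorCol n D) = ((Ilist n D).map (mirror n)).reverse := by
  have hI : ∀ z ∈ Ilist n D, 1 ≤ z ∧ z ≤ n := fun z hz => mem_range_of_mem_Ilist hz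
  refine (Ilist_pairwise n _).eq_of_mem_iff
    (pairwise_reverse_map_mirror (Ilist_pairwise n D) fun z hz => (hI z hz).2) fun z => ?_
  rw [mem_Ilist]
  constructor
  · rintro ⟨hz1, hzn, hz, hbz⟩
    rw [(mirror_mem_mirrorCol_iff hD hz1 hzn).1] at hz
    rw [(mirror_mem_mirrorCol_iff hD hz1 hzn).2] at hbz
    rw [mem_reverse_map_mirror (fun x hx => ⟨(hI x hx).1, by linarith [hI x hx]⟩) hz1 (by omega),
      mem_Ilist, mirror_of_le hzn] at ⊢
    rw [mirror_of_le hzn] at hz hbz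
    exact ⟨by omega, by omega, hz, hbz⟩
  · intro hz
    obtain ⟨y, hy, rfl⟩ := List.mem_map.1 (List.mem_reverse.1 hz)
    obtain ⟨hy1, hyn, hyD, hbyD⟩ := mem_Ilist.1 hy
    have h1 : 1 ≤ mirror n y := by rw [mirror_of_le hyn]; omega
    have hn : mirror n y ≤ n := by rw [mirror_of_le hyn]; omega
    have hyy := mirror_mirror (n := n) hy1 (by omega)
    refine ⟨h1, hn, (mirror_mem_mirrorCol_iff hD h1 hn).1.2 ?_,
      (mirror_mem_mirrorCol_iff hD h1 hn).2.2 ?_⟩ <;> rwa [hyy]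

lemma mem_freeLetters_mirrorCol (hD : IsColumn n D) {s : ℕ} :
    s ∈ freeLetters n (mirrorCol n D) ↔ 1 ≤ s ∧ s ≤ n ∧ mirror n s ∈ freeLetters n D := by
  rw [mem_freeLetters]
  constructor
  · rintro ⟨hs1, hsn, hs, hbs⟩
    rw [(mirror_mem_mirrorCol_iff hD hs1 hsn).1] at hs
    rw [(mirror_mem_mirrorCol_iff hD hs1 hsn).2] at hbs
    rw [mem_freeLetters, mirror_of_le hsn] at *
    exact ⟨hs1, hsn, by omega, by omega, hs, hbs⟩
  · rintro ⟨hs1, hsn, hs⟩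
    rw [(mirror_mem_mirrorCol_iff hD hs1 hsn).1, (mirror_mem_mirrorCol_iff hD hs1 hsn).2]
    exact ⟨hs1, hsn, (mem_freeLetters.1 hs).2.2⟩

end Mirror

/-! ### The inverse of `Φ` -/

section Inverse

variable {n : ℕ}

lemma mem_map_bar_reverse_map_mirror {L : List ℕ} (hL : ∀ x ∈ L, 1 ≤ x ∧ x ≤ 2 * n) {x : ℕ}
    (hx1 : 1 ≤ x) (hx2 : x ≤ 2 * n) :
    x ∈ ((L.map (mirror n)).reverse).map (bar n) ↔ mirror n x ∈ L.map (bar n) := by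
  have hL' : ∀ y ∈ (L.map (mirror n)).reverse, y ≤ 2 * n := fun y hy => by
    obtain ⟨z, hz, rfl⟩ := List.mem_map.1 (List.mem_reverse.1 hy)
    exact (mirror_mem_range (hL z hz).1 (hL z hz).2).2
  have hb1 : 1 ≤ bar n x := by unfold bar; omega
  have hb2 : bar n x ≤ 2 * n := by unfold bar; omega
  rw [mem_map_bar_iff hL' hx2, mem_reverse_map_mirror hL hb1 hb2,
    mem_map_bar_iff (fun y hy => (hL y hy).2) (mirror_mem_range hx1 hx2).2, bar_mirror hx1 hx2]

lemma Ilist_mirrorCol_phiCol {C : List ℕ} (hC : IsColumn n C) :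
    Ilist n (mirrorCol n (PhiCol n C)) = ((Jlist n C).map (mirror n)).reverse := by
  rw [Ilist_mirrorCol (isColumn_phiCol hC), Ilist_phiCol]

/-- The free letters of `mirrorCol n (Φ C)` are the mirrors of the pairs of `C` and of the free
letters outside `J`, so its greedy splitting retraces that of `C` backwards. -/
lemma Jlist_mirrorCol_phiCol {C : List ℕ} (hC : IsColumn n C) (hs : CanSplit n C) :
    Jlist n (mirrorCol n (PhiCol n C)) = ((Ilist n C).map (mirror n)).reverse := by
  refine Jlist_eq_of_isGreedySplit (Ilist_mirrorCol_phiCol hC ▸ (isGreedySplit_Jlist hs).mirror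
    (Ilist_pairwise n C) (fun z hz => mem_range_of_mem_Ilist hz)
    (fun t ht => ⟨(mem_freeLetters.1 ht).1, (mem_freeLetters.1 ht).2.1⟩) fun s => ?_)
  rw [mem_freeLetters_mirrorCol (isColumn_phiCol hC), mem_freeLetters_phiCol]

theorem phiCol_mirrorCol_phiCol {C : List ℕ} (hC : IsColumn n C) (hs : CanSplit n C) :
    PhiCol n (mirrorCol n (PhiCol n C)) = mirrorCol n C := by
  have hΦ := isColumn_phiCol hC
  have hE := isColumn_phiCol (isColumn_mirrorCol hΦ)
  have hI : ∀ z ∈ Ilist n C, 1 ≤ z ∧ z ≤ 2 * n := fun z hz =>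
    ⟨(mem_range_of_mem_Ilist hz).1, by linarith [mem_range_of_mem_Ilist hz]⟩
  have hJ : ∀ t ∈ Jlist n C, 1 ≤ t ∧ t ≤ 2 * n := fun t ht =>
    ⟨(mem_range_of_mem_Jlist ht).1, by linarith [mem_range_of_mem_Jlist ht]⟩
  refine hE.eq_of_mem_iff (isColumn_mirrorCol hC) fun x => ?_
  by_cases hx : 1 ≤ x ∧ x ≤ 2 * n
  · obtain ⟨hx1, hx2⟩ := hx
    rw [mem_phiCol, Ilist_mirrorCol_phiCol hC, Jlist_mirrorCol_phiCol hC hs, mem_mirrorCol hΦ,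
      mem_mirrorCol hC, mem_reverse_map_mirror hJ hx1 hx2, mem_reverse_map_mirror hI hx1 hx2,
      mem_map_bar_reverse_map_mirror hJ hx1 hx2, mem_map_bar_reverse_map_mirror hI hx1 hx2,
      mem_phiCol]
    have hIC : mirror n x ∈ Ilist n C → mirror n x ∈ C := fun h => (mem_Ilist.1 h).2.2.1
    have hIbC : mirror n x ∈ (Ilist n C).map (bar n) → mirror n x ∈ C := fun h => by
      obtain ⟨z, hz, hzx⟩ := List.mem_map.1 h
      exact hzx ▸ (mem_Ilist.1 hz).2.2.2
    have hJC : mirror n x ∈ Jlist n C → mirror n x ∉ C := fun h => (not_mem_of_mem_Jlist h).1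
    have hJbC : mirror n x ∈ (Jlist n C).map (bar n) → mirror n x ∉ C := fun h => by
      obtain ⟨t, ht, htx⟩ := List.mem_map.1 h
      exact htx ▸ (not_mem_of_mem_Jlist ht).2
    tauto
  · exact iff_of_false (fun h => hx (hE.2 x h)) (fun h => hx ((isColumn_mirrorCol hC).2 x h))

def phiColInv (n : ℕ) (D : List ℕ) : List ℕ := mirrorCol n (PhiCol n (mirrorCol n D))

lemma phiColInv_phiCol {C : List ℕ} (hC : IsColumn n C) (hocc : OCC n C) :
    phiColInv n (PhiCol n C) = C := by
  rw [phiColInv, phiCol_mirrorCol_phiCol hC (canSplit_of_occ hC hocc), mirrorCol_mirrorCol hC]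

lemma canSplit_mirrorCol {D : List ℕ} (hD : IsColumn n D) (hco : CoAdm n D) :
    CanSplit n (mirrorCol n D) :=
  canSplit_of_occ (isColumn_mirrorCol hD) (occ_mirrorCol hD hco)

lemma phiCol_phiColInv {D : List ℕ} (hD : IsColumn n D) (hco : CoAdm n D) :
    PhiCol n (phiColInv n D) = D := by
  rw [phiColInv, phiCol_mirrorCol_phiCol (isColumn_mirrorCol hD) (canSplit_mirrorCol hD hco),
    mirrorCol_mirrorCol hD]

lemma isColumn_phiColInv {D : List ℕ} (hD : IsColumn n D) : IsColumn n (phiColInv n D) :=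
  isColumn_mirrorCol (isColumn_phiCol (isColumn_mirrorCol hD))

lemma occ_phiColInv {D : List ℕ} (hD : IsColumn n D) : OCC n (phiColInv n D) :=
  occ_mirrorCol (isColumn_phiCol (isColumn_mirrorCol hD)) (coAdm_phiCol (isColumn_mirrorCol hD))

lemma length_phiColInv {D : List ℕ} (hD : IsColumn n D) (hco : CoAdm n D) :
    (phiColInv n D).length = D.length := by
  rw [phiColInv, length_mirrorCol,
    length_phiCol (isColumn_mirrorCol hD) (canSplit_mirrorCol hD hco), length_mirrorCol]

end Inverse

/-- `Φ(C)` is a coadmissible column of the same height, and `Φ` is a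
bijection between admissible and coadmissible columns of the same height. -/
theorem phiCol_coadmissible_bijective (n : ℕ) :
    (∀ C, IsColumn n C → OCC n C →
      IsColumn n (PhiCol n C) ∧ CoAdm n (PhiCol n C) ∧ (PhiCol n C).length = C.length) ∧
    (∀ h : ℕ, Set.BijOn (PhiCol n)
      {C | IsColumn n C ∧ OCC n C ∧ C.length = h}
      {C | IsColumn n C ∧ CoAdm n C ∧ C.length = h}) := by
  have hΦ : ∀ C, IsColumn n C → OCC n C →
      IsColumn n (PhiCol n C) ∧ CoAdm n (PhiCol n C) ∧ (PhiCol n C).length = C.length :=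
    fun C hC hocc =>
      ⟨isColumn_phiCol hC, coAdm_phiCol hC, length_phiCol hC (canSplit_of_occ hC hocc)⟩
  refine ⟨hΦ, fun h => Set.InvOn.bijOn (f' := phiColInv n) ⟨?_, ?_⟩ ?_ ?_⟩
  · rintro C ⟨hC, hocc, -⟩
    exact phiColInv_phiCol hC hocc
  · rintro D ⟨hD, hco, -⟩
    exact phiCol_phiColInv hD hco
  · rintro C ⟨hC, hocc, rfl⟩
    exact hΦ C hC hocc
  · rintro D ⟨hD, hco, rfl⟩
    exact ⟨isColumn_phiColInv hD, occ_phiColInv hD, length_phiColInv hD hco⟩
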